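/- arXiv:2206.06709 — 2 statements merged into one kernel-verified Lean document; each statement's English description precedes it below -/
import Mathlib

section
/- For all positive integers h and k, the number N(h,k) = (∏_{i=1}^{h-1} i!) * (∏_{j=1}^{k-1} j!) * (hk)! / (∏_{i=1}^{h+k-1} i!) is a positive integer, i.e. (∏_{i=1}^{h+k-1} i!) divides (∏_{i=1}^{h-1} i!) * (∏_{j=1}^{k-1} j!) * (hk)!. -/
/-!
By Legendre's formula it suffices to show, for every prime power `q`, that
`∑_{i<h+k} ⌊i/q⌋ ≤ ∑_{i<h} ⌊i/q⌋ + ∑_{i<k} ⌊i/q⌋ + ⌊hk/q⌋`.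
Since `i = q⌊i/q⌋ + (i mod q)` and `∑_{i<h+k} i = ∑_{i<h} i + ∑_{i<k} i + hk`, this reduces to the
superadditivity of `n ↦ ∑_{i<n} (i mod q)`, i.e. to the fact that no window of `k` consecutive
integers has a smaller sum of residues mod `q` than `[0, k)`: whole periods contribute the same
amount to every window, and fewer than `q` consecutive integers have distinct residues.
-/

open Finset

/-- The superfactorial `sf n = ∏_{i=1}^{n} i!`. -/
def sf (n : ℕ) : ℕ := ∏ i ∈ Finset.Icc 1 n, Nat.factorial i

theorem sum_range_add_mod_self (q x : ℕ) :
    ∑ i ∈ range q, (x + i) % q = ∑ i ∈ range q, i % q := by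
  induction x with
  | zero => simp
  | succ x ih =>
    have shift := sum_range_succ' (fun i => (x + i) % q) q
    rw [sum_range_succ, add_zero, Nat.add_mod_right] at shift
    simpa only [add_assoc, add_comm 1, ih, add_left_inj] using shift.symm

theorem sum_range_mod_le_sum_range_add_mod_of_le {q y : ℕ} (x : ℕ) (hy : y ≤ q) :
    ∑ i ∈ range y, i % q ≤ ∑ i ∈ range y, (x + i) % q := by
  have hlt : ∀ i ∈ range y, i < q := fun i hi => (mem_range.mp hi).trans_le hy
  have hinj : Set.InjOn (fun i => (((x + i) % q : ℕ) : ℤ)) (range y) := by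
    intro i hi j hj hij
    have hmod : i ≡ j [MOD q] := Nat.ModEq.add_left_cancel' x (Int.ofNat_inj.mp hij)
    rwa [Nat.ModEq, Nat.mod_eq_of_lt (hlt i hi), Nat.mod_eq_of_lt (hlt j hj)] at hmod
  have key := sum_range_le_sum (s := (range y).image fun i => (((x + i) % q : ℕ) : ℤ)) (c := 0)
    fun _ hn => by obtain ⟨i, -, rfl⟩ := mem_image.mp hn; positivity
  rw [sum_image hinj, Finset.card_image_of_injOn hinj, card_range] at key
  rw [sum_congr rfl fun i hi => Nat.mod_eq_of_lt (hlt i hi)]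
  simp only [zero_add] at key
  rw [← Nat.cast_sum (range y) (fun i => i)] at key
  exact_mod_cast key

theorem sum_range_mod_le_sum_range_add_mod {q : ℕ} (hq : 0 < q) (x y : ℕ) :
    ∑ i ∈ range y, i % q ≤ ∑ i ∈ range y, (x + i) % q := by
  obtain ⟨m, r, hr, rfl⟩ : ∃ m r, r < q ∧ y = q * m + r :=
    ⟨y / q, y % q, Nat.mod_lt _ hq, (Nat.div_add_mod y q).symm⟩
  induction m with
  | zero => simpa using sum_range_mod_le_sum_range_add_mod_of_le x hr.le
  | succ m ih =>
    rw [show q * (m + 1) + r = q + (q * m + r) by ring, sum_range_add _ q, sum_range_add _ q,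
      sum_range_add_mod_self]
    simpa only [add_left_comm x q, Nat.add_mod_left, add_le_add_iff_left] using ih

theorem sum_range_mod_add_sum_range_mod_le {q : ℕ} (hq : 0 < q) (a b : ℕ) :
    ∑ i ∈ range a, i % q + ∑ i ∈ range b, i % q ≤ ∑ i ∈ range (a + b), i % q := by
  rw [sum_range_add]
  exact add_le_add_right (sum_range_mod_le_sum_range_add_mod hq a b) _

theorem mul_sum_range_div_add_sum_range_mod (q n : ℕ) :
    q * ∑ i ∈ range n, i / q + ∑ i ∈ range n, i % q = ∑ i ∈ range n, i := by
  rw [mul_sum, ← sum_add_distrib]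
  exact sum_congr rfl fun i _ => Nat.div_add_mod i q

theorem sum_range_id_add (a b : ℕ) :
    ∑ i ∈ range (a + b), i = ∑ i ∈ range a, i + ∑ i ∈ range b, i + a * b := by
  rw [sum_range_add, sum_add_distrib, sum_const, card_range, smul_eq_mul, mul_comm b]
  ring

theorem sum_range_div_add_le {q : ℕ} (hq : 0 < q) (a b : ℕ) :
    ∑ i ∈ range (a + b), i / q ≤ ∑ i ∈ range a, i / q + ∑ i ∈ range b, i / q + a * b / q := by
  have hmul : (∑ i ∈ range (a + b), i / q) * q ≤
      a * b + (∑ i ∈ range a, i / q + ∑ i ∈ range b, i / q) * q := by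
    have hmod := sum_range_mod_add_sum_range_mod_le hq a b
    have hid := sum_range_id_add a b
    simp only [← mul_sum_range_div_add_sum_range_mod q] at hid
    linarith
  rw [add_comm _ (a * b / q), ← Nat.add_mul_div_right _ _ hq]
  exact (Nat.le_div_iff_mul_le hq).mpr hmul

theorem sf_sub_one_eq_prod_range (n : ℕ) : sf (n - 1) = ∏ i ∈ range n, i.factorial := by
  cases n with
  | zero => rfl
  | succ m => exact (Nat.prod_Icc_factorial m).trans (Nat.prod_range_succ_factorial m).symm

theorem factorization_prod_range_factorial {p : ℕ} (hp : p.Prime) {n b : ℕ} (hn : n ≤ b) :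
    (∏ i ∈ range n, i.factorial).factorization p = ∑ j ∈ Ico 1 b, ∑ i ∈ range n, i / p ^ j := by
  rw [Nat.factorization_prod fun i _ => Nat.factorial_ne_zero i, Finsupp.finsetSum_apply, sum_comm]
  refine sum_congr rfl fun i hi => Nat.factorization_factorial hp ?_
  exact (Nat.log_le_self p i).trans_lt ((mem_range.mp hi).trans_le hn)

theorem prod_range_factorial_add_dvd (h k : ℕ) :
    ∏ i ∈ range (h + k), i.factorial ∣
      (∏ i ∈ range h, i.factorial) * (∏ i ∈ range k, i.factorial) * (h * k).factorial := by
  refine (Nat.factorization_prime_le_iff_dvd (by positivity) (by positivity)).mp fun p hp => ?_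
  set b := h + k + h * k + 1
  rw [Nat.factorization_mul (by positivity) (by positivity),
    Nat.factorization_mul (by positivity) (by positivity), Finsupp.add_apply, Finsupp.add_apply,
    factorization_prod_range_factorial hp (b := b) (by omega),
    factorization_prod_range_factorial hp (b := b) (by omega),
    factorization_prod_range_factorial hp (b := b) (by omega),
    Nat.factorization_factorial hp (b := b) ((Nat.log_le_self p _).trans_lt (by omega)),
    ← sum_add_distrib, ← sum_add_distrib]
  exact sum_le_sum fun j _ => sum_range_div_add_le (pow_pos hp.pos j) h k

theorem castelnuovo_number_integral_general (h k : ℕ) :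
    sf (h + k - 1) ∣ sf (h - 1) * sf (k - 1) * Nat.factorial (h * k) := by
  rw [sf_sub_one_eq_prod_range, sf_sub_one_eq_prod_range, sf_sub_one_eq_prod_range]
  exact prod_range_factorial_add_dvd h k

/-- Integrality of Castelnuovo's number: for positive `h`, `k`,
`(∏_{i=1}^{h+k-1} i!)` divides `(∏_{i=1}^{h-1} i!) * (∏_{j=1}^{k-1} j!) * (hk)!`. -/
theorem castelnuovo_number_integral (h k : ℕ) (hh : 1 ≤ h) (hk : 1 ≤ k) :
    sf (h + k - 1) ∣ sf (h - 1) * sf (k - 1) * Nat.factorial (h * k) :=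
  castelnuovo_number_integral_general h k
end

section
/- Castelnuovo's number N(h,k) equals the number of standard Young tableaux of rectangular shape with k rows and h columns, i.e. N(h,k) = (hk)! / ∏_{(i,j)} hook(i,j), where the hook length of cell (i,j) in the k×h rectangle is (k - i) + (h - j) + 1. -/
open Finset

/-- Castelnuovo's number `N(h,k)` as a rational number. -/
def castelnuovoN (h k : ℕ) : ℚ :=
  (sf (h - 1) * sf (k - 1) * Nat.factorial (h * k) : ℚ) / (sf (h + k - 1) : ℚ)

/-!
Index the cell in row `i`, column `j` of the `k × h` rectangle by `a = k - i < k` and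
`b = h - j < h`, so that its hook length is `a + b + 1`. The hooks of row `a` multiply to
`(a + h)! / a!`, so `0! ⋯ (k-1)!` times the product `H` of all hooks is `h! ⋯ (h+k-1)!`;
a further factor `0! ⋯ (h-1)!` completes this to `0! ⋯ (h+k-1)!`.
That is, `sf (h-1) · sf (k-1) · H = sf (h+k-1)`, which is the claim.
-/

theorem sf_eq_superFactorial (n : ℕ) : sf n = n.superFactorial :=
  Nat.prod_Icc_factorial n

theorem superFactorial_pos (n : ℕ) : 0 < n.superFactorial := by
  rw [← Nat.prod_Icc_factorial]
  exact prod_pos fun i _ => i.factorial_pos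

theorem prod_range_factorial_eq_superFactorial_sub_one (n : ℕ) :
    ∏ i ∈ range n, i.factorial = (n - 1).superFactorial := by
  cases n with
  | zero => rfl
  | succ n => exact Nat.prod_range_succ_factorial n

theorem prod_Icc_one_sub_eq_prod_range {M : Type*} [CommMonoid M] (f : ℕ → M) (n : ℕ) :
    ∏ i ∈ Icc 1 n, f (n - i) = ∏ i ∈ range n, f i := by
  rw [← Ico_add_one_right_eq_Icc, prod_Ico_reflect f 1 le_rfl, range_eq_Ico]
  simp

def rectangleHookProduct (h k : ℕ) : ℕ := ∏ a ∈ range k, ∏ b ∈ range h, (a + b + 1)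

theorem prod_range_factorial_mul_rectangleHookProduct (h k : ℕ) :
    (∏ a ∈ range k, a.factorial) * rectangleHookProduct h k
      = ∏ a ∈ range k, (h + a).factorial := by
  rw [rectangleHookProduct, ← prod_mul_distrib]
  refine prod_congr rfl fun a _ => ?_
  rw [add_comm, ← Nat.factorial_mul_ascFactorial, Nat.ascFactorial_eq_prod_range]
  simp only [add_right_comm]

theorem superFactorial_mul_superFactorial_mul_rectangleHookProduct (h k : ℕ) :
    (h - 1).superFactorial * (k - 1).superFactorial * rectangleHookProduct h k
      = (h + k - 1).superFactorial := by
  simp only [← prod_range_factorial_eq_superFactorial_sub_one]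
  rw [mul_assoc, prod_range_factorial_mul_rectangleHookProduct, prod_range_add]

theorem prod_Icc_Icc_hook_eq_rectangleHookProduct (h k : ℕ) :
    ∏ i ∈ Icc 1 k, ∏ j ∈ Icc 1 h, ((k - i) + (h - j) + 1 : ℚ)
      = rectangleHookProduct h k := by
  rw [rectangleHookProduct, ← prod_Icc_one_sub_eq_prod_range, Nat.cast_prod]
  refine prod_congr rfl fun i hi => ?_
  rw [← prod_Icc_one_sub_eq_prod_range, Nat.cast_prod]
  refine prod_congr rfl fun j hj => ?_
  rw [mem_Icc] at hi hj
  push_cast [hi.2, hj.2]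
  rfl

theorem castelnuovoN_eq_hook_length_formula_general (h k : ℕ) :
    castelnuovoN h k
      = (Nat.factorial (h * k) : ℚ) /
        ∏ i ∈ Finset.Icc 1 k, ∏ j ∈ Finset.Icc 1 h, ((k - i) + (h - j) + 1 : ℚ) := by
  rw [castelnuovoN, prod_Icc_Icc_hook_eq_rectangleHookProduct]
  simp only [sf_eq_superFactorial, ← superFactorial_mul_superFactorial_mul_rectangleHookProduct]
  have hsf : ((h - 1).superFactorial * (k - 1).superFactorial : ℚ) ≠ 0 := by
    exact_mod_cast (mul_pos (superFactorial_pos _) (superFactorial_pos _)).ne'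
  push_cast
  rw [mul_div_mul_left _ _ hsf]

/-- Hook length formula for the `k × h` rectangle: Castelnuovo's number equals
`(hk)!` divided by the product of the hook lengths, where the cell in (1-based)
row `i`, column `j` has hook length `(k - i) + (h - j) + 1`. -/
theorem castelnuovoN_eq_hook_length_formula (h k : ℕ) (hh : 1 ≤ h) (hk : 1 ≤ k) :
    castelnuovoN h k
      = (Nat.factorial (h * k) : ℚ) /
        ∏ i ∈ Finset.Icc 1 k, ∏ j ∈ Finset.Icc 1 h, ((k - i) + (h - j) + 1 : ℚ) :=
  castelnuovoN_eq_hook_length_formula_general h k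
end
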